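/- arXiv:2509.20928 — 2 statements merged into one kernel-verified Lean document; each statement's English description precedes it below -/
import Mathlib

section
/- Let d be a positive integer, let μ, μ̂ ∈ ℝ^d, and let Σ, Σ̂ be d×d real symmetric positive-definite matrices. Let λ̂_min denote the smallest eigenvalue of Σ̂. If (1/λ̂_min)·(‖μ − μ̂‖₂² + ‖Σ − Σ̂‖_N) + √d·‖Σ − Σ̂‖_F ≤ ‖μ‖₂², then log det Σ̂ + tr(Σ̂⁻¹ Σ) + (μ − μ̂)ᵀ Σ̂⁻¹ (μ − μ̂) ≤ tr Σ + ‖μ‖₂². -/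
/-!
Write `Σ̂ = V diag(λ) Vᵀ` and `c = 1 / λ̂_min`, so that `0 ≤ Σ̂⁻¹ ≤ c • 1` in the Loewner order.
Then `log det Σ̂ = ∑ log λᵢ ≤ tr Σ̂ - d`, and `tr(Σ̂⁻¹ Σ) = d + tr(Σ̂⁻¹ (Σ - Σ̂))`, where the last
trace is at most `c ‖Σ - Σ̂‖_N` (diagonalize `Σ - Σ̂`: the diagonal of the conjugated `Σ̂⁻¹` lies
in `[0, c]`). The quadratic term is at most `c ‖μ - μ̂‖₂²`, and Cauchy–Schwarz on the diagonal gives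
`tr Σ̂ - tr Σ ≤ √d ‖Σ - Σ̂‖_F`. Summing, the hypothesis closes the estimate.
-/

open Matrix Real

open scoped MatrixOrder

theorem inv_le_inv_ciInf {ι : Type*} [Finite ι] {f : ι → ℝ} (hf : ∀ i, 0 < f i) (i : ι) :
    (f i)⁻¹ ≤ (⨅ j, f j)⁻¹ := by
  have : Nonempty ι := ⟨i⟩
  obtain ⟨j, hj⟩ := exists_eq_ciInf_of_finite (f := f)
  exact inv_anti₀ (hj ▸ hf j) (ciInf_le (Set.finite_range f).bddBelow i)

namespace Matrix

variable {n : Type*}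

theorem abs_trace_le_sqrt_card_mul_sqrt_sum_sq [Fintype n] (A : Matrix n n ℝ) :
    |A.trace| ≤ √(Fintype.card n) * √(∑ i, ∑ j, A i j ^ 2) := by
  rw [← Real.sqrt_mul (Nat.cast_nonneg _)]
  refine Real.abs_le_sqrt ?_
  calc A.trace ^ 2 ≤ Fintype.card n * ∑ i, A i i ^ 2 := sq_sum_le_card_mul_sum_sq
    _ ≤ Fintype.card n * ∑ i, ∑ j, A i j ^ 2 := by
      gcongr with i
      exact Finset.single_le_sum (f := fun j => A i j ^ 2) (fun j _ => sq_nonneg _)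
        (Finset.mem_univ i)

variable [DecidableEq n]

theorem diagonal_le_diagonal {a b : n → ℝ} (h : ∀ i, a i ≤ b i) :
    diagonal a ≤ diagonal b := by
  rw [le_iff, diagonal_sub, posSemidef_diagonal_iff]
  exact fun i => sub_nonneg.mpr (h i)

theorem diag_le_of_le_smul_one {M : Matrix n n ℝ} {c : ℝ} (h : M ≤ c • 1) (i : n) :
    M i i ≤ c := by
  simpa using (le_iff.mp h).diag_nonneg (i := i)

variable [Fintype n]

theorem dotProduct_mulVec_le_of_le_smul_one {M : Matrix n n ℝ} {c : ℝ} (h : M ≤ c • 1)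
    (x : n → ℝ) : x ⬝ᵥ (M *ᵥ x) ≤ c * (x ⬝ᵥ x) := by
  have := (le_iff.mp h).dotProduct_mulVec_nonneg x
  simp only [star_trivial, sub_mulVec, dotProduct_sub, smul_mulVec, one_mulVec,
    dotProduct_smul, smul_eq_mul] at this
  linarith

theorem trace_inv_mul_eq_trace_inv_mul_sub_add_card {R : Type*} [CommRing R] {S : Matrix n n R}
    (hS : IsUnit S.det) (T : Matrix n n R) :
    (S⁻¹ * T).trace = (S⁻¹ * (T - S)).trace + Fintype.card n := by
  rw [Matrix.mul_sub, nonsing_inv_mul _ hS, trace_sub, trace_one, sub_add_cancel]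

namespace IsHermitian

theorem eq_eigenvectorUnitary_mul_diagonal_mul_star {A : Matrix n n ℝ} (hA : A.IsHermitian) :
    A = (hA.eigenvectorUnitary : Matrix n n ℝ) * diagonal hA.eigenvalues *
      star (hA.eigenvectorUnitary : Matrix n n ℝ) := by
  simpa using hA.spectral_theorem

theorem trace_mul_le_of_nonneg_of_le_smul_one {A M : Matrix n n ℝ} (hA : A.IsHermitian)
    {c : ℝ} (hM₀ : 0 ≤ M) (hMc : M ≤ c • 1) :
    (M * A).trace ≤ c * ∑ i, |hA.eigenvalues i| := by
  set V := (hA.eigenvectorUnitary : Matrix n n ℝ)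
  set N := star V * M * V
  have hN₀ (i : n) : 0 ≤ N i i := (star_left_conjugate_nonneg hM₀ V).posSemidef.diag_nonneg
  have hNc (i : n) : N i i ≤ c :=
    diag_le_of_le_smul_one (by simpa [V] using star_left_conjugate_le_conjugate hMc V) i
  have htrace : (M * A).trace = ∑ i, hA.eigenvalues i * N i i := by
    conv_lhs => rw [hA.eq_eigenvectorUnitary_mul_diagonal_mul_star]
    rw [← mul_assoc, ← mul_assoc, trace_mul_cycle, trace, ← mul_assoc]
    simp [N, V, mul_diagonal, mul_comm]
  rw [htrace, Finset.mul_sum]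
  refine Finset.sum_le_sum fun i _ => ?_
  calc hA.eigenvalues i * N i i ≤ |hA.eigenvalues i| * N i i := by
        gcongr
        exacts [hN₀ i, le_abs_self _]
    _ ≤ |hA.eigenvalues i| * c := by gcongr; exact hNc i
    _ = c * |hA.eigenvalues i| := mul_comm _ _

end IsHermitian

namespace PosDef

theorem inv_eq_eigenvectorUnitary_mul_diagonal_mul_star {S : Matrix n n ℝ} (hS : S.PosDef) :
    S⁻¹ = (hS.1.eigenvectorUnitary : Matrix n n ℝ) * diagonal hS.1.eigenvalues⁻¹ *
      star (hS.1.eigenvectorUnitary : Matrix n n ℝ) := by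
  set V := (hS.1.eigenvectorUnitary : Matrix n n ℝ)
  have hV : star V * V = 1 := Unitary.coe_star_mul_self _
  have hV' : V * star V = 1 := Unitary.coe_mul_star_self _
  have hD : diagonal hS.1.eigenvalues⁻¹ * diagonal hS.1.eigenvalues = 1 := by
    rw [diagonal_mul_diagonal, ← diagonal_one]
    exact congrArg diagonal (funext fun i => inv_mul_cancel₀ (hS.eigenvalues_pos i).ne')
  refine inv_eq_left_inv ?_
  calc _ = V * diagonal hS.1.eigenvalues⁻¹ * star V * (V * diagonal hS.1.eigenvalues * star V) :=
        congrArg (_ * ·) hS.1.eq_eigenvectorUnitary_mul_diagonal_mul_star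
    _ = 1 := by
        simp only [mul_assoc]
        rw [← mul_assoc (star V), hV, one_mul, ← mul_assoc (diagonal _), hD, one_mul, hV']

theorem inv_le_smul_one {S : Matrix n n ℝ} (hS : S.PosDef) {c : ℝ}
    (hc : ∀ i, (hS.1.eigenvalues i)⁻¹ ≤ c) : S⁻¹ ≤ c • 1 := by
  have h := star_right_conjugate_le_conjugate
    (diagonal_le_diagonal (a := hS.1.eigenvalues⁻¹) (b := fun _ => c) hc)
    (hS.1.eigenvectorUnitary : Matrix n n ℝ)
  rwa [← hS.inv_eq_eigenvectorUnitary_mul_diagonal_mul_star, ← smul_one_eq_diagonal,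
    Matrix.mul_smul, Matrix.mul_one, Matrix.smul_mul,
    Unitary.mul_star_self_of_mem hS.1.eigenvectorUnitary.2] at h

theorem log_det_le_trace_sub_card {S : Matrix n n ℝ} (hS : S.PosDef) :
    Real.log S.det ≤ S.trace - Fintype.card n := by
  rw [hS.1.det_eq_prod_eigenvalues, hS.1.trace_eq_sum_eigenvalues]
  simp only [RCLike.ofReal_real_eq_id, id]
  calc Real.log (∏ i, hS.1.eigenvalues i) = ∑ i, Real.log (hS.1.eigenvalues i) :=
        Real.log_prod fun i _ => (hS.eigenvalues_pos i).ne'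
    _ ≤ ∑ i, (hS.1.eigenvalues i - 1) :=
        Finset.sum_le_sum fun i _ => Real.log_le_sub_one_of_pos (hS.eigenvalues_pos i)
    _ = _ := by simp [Finset.sum_sub_distrib]

end PosDef

end Matrix

theorem stmt_0_general (d : ℕ) (mu muHat : Fin d → ℝ)
    (Sig SigHat : Matrix (Fin d) (Fin d) ℝ)
    (hSig : Sig.PosDef) (hSigHat : SigHat.PosDef)
    (hcond :
      (⨅ i, hSigHat.1.eigenvalues i)⁻¹ *
          ((∑ i, (mu i - muHat i) ^ 2) +
            ∑ i, |(hSig.1.sub hSigHat.1).eigenvalues i|) +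
        Real.sqrt d * Real.sqrt (∑ i, ∑ j, (Sig i j - SigHat i j) ^ 2) ≤
      ∑ i, mu i ^ 2) :
    Real.log SigHat.det + (SigHat⁻¹ * Sig).trace +
        (mu - muHat) ⬝ᵥ (SigHat⁻¹ *ᵥ (mu - muHat)) ≤
      Sig.trace + ∑ i, mu i ^ 2 := by
  set c := (⨅ i, hSigHat.1.eigenvalues i)⁻¹
  have hinv : SigHat⁻¹ ≤ c • 1 :=
    hSigHat.inv_le_smul_one (inv_le_inv_ciInf hSigHat.eigenvalues_pos)
  have hlogdet : Real.log SigHat.det ≤ SigHat.trace - d := by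
    simpa using hSigHat.log_det_le_trace_sub_card
  have htrace : (SigHat⁻¹ * Sig).trace = (SigHat⁻¹ * (Sig - SigHat)).trace + d := by
    simpa using trace_inv_mul_eq_trace_inv_mul_sub_add_card
      ((isUnit_iff_isUnit_det _).mp hSigHat.isUnit) Sig
  have hnuclear : (SigHat⁻¹ * (Sig - SigHat)).trace ≤
      c * ∑ i, |(hSig.1.sub hSigHat.1).eigenvalues i| :=
    (hSig.1.sub hSigHat.1).trace_mul_le_of_nonneg_of_le_smul_one hSigHat.inv.posSemidef.nonneg hinv
  have hquad :
      (mu - muHat) ⬝ᵥ (SigHat⁻¹ *ᵥ (mu - muHat)) ≤ c * ∑ i, (mu i - muHat i) ^ 2 := by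
    simpa [dotProduct, sq] using dotProduct_mulVec_le_of_le_smul_one hinv (mu - muHat)
  have hfrobenius : SigHat.trace - Sig.trace ≤
      √d * √(∑ i, ∑ j, (Sig i j - SigHat i j) ^ 2) := by
    have := abs_trace_le_sqrt_card_mul_sqrt_sum_sq (Sig - SigHat)
    simp only [trace_sub, Matrix.sub_apply, Fintype.card_fin] at this
    linarith [neg_abs_le (Sig.trace - SigHat.trace)]
  rw [mul_add] at hcond
  linarith

/-- moment-form core of Theorem 1 of the paper.
If `(1/λ̂_min)·(‖μ − μ̂‖₂² + ‖Σ − Σ̂‖_N) + √d·‖Σ − Σ̂‖_F ≤ ‖μ‖₂²`, then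
`log det Σ̂ + tr(Σ̂⁻¹ Σ) + (μ − μ̂)ᵀ Σ̂⁻¹ (μ − μ̂) ≤ tr Σ + ‖μ‖₂²`. -/
theorem stmt_0 (d : ℕ) (hd : 0 < d) (mu muHat : Fin d → ℝ)
    (Sig SigHat : Matrix (Fin d) (Fin d) ℝ)
    (hSig : Sig.PosDef) (hSigHat : SigHat.PosDef)
    (hcond :
      (⨅ i, hSigHat.1.eigenvalues i)⁻¹ *
          ((∑ i, (mu i - muHat i) ^ 2) +
            ∑ i, |(hSig.1.sub hSigHat.1).eigenvalues i|) +
        Real.sqrt d * Real.sqrt (∑ i, ∑ j, (Sig i j - SigHat i j) ^ 2) ≤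
      ∑ i, mu i ^ 2) :
    Real.log SigHat.det + (SigHat⁻¹ * Sig).trace +
        (mu - muHat) ⬝ᵥ (SigHat⁻¹ *ᵥ (mu - muHat)) ≤
      Sig.trace + ∑ i, mu i ^ 2 :=
  stmt_0_general d mu muHat Sig SigHat hSig hSigHat hcond
end

section
/- Let d be a positive integer, let μ̂, Σ̂, μ, Σ be as follows: μ, μ̂ ∈ ℝ^d, Σ, Σ̂ d×d symmetric positive-definite matrices, and let λ̂_min be the smallest eigenvalue of Σ̂. Then log det Σ̂ + tr(Σ̂⁻¹ Σ) + (μ − μ̂)ᵀ Σ̂⁻¹ (μ − μ̂) ≤ tr Σ + √d·‖Σ̂ − Σ‖_F + (1/λ̂_min)·( ‖Σ − Σ̂‖_N + ‖μ − μ̂‖₂² ). -/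
open Matrix Real

/-!
Diagonalise `Σ̂ = U diag(λ) Uᵀ`. Then `Σ̂⁻¹ = U diag(λ⁻¹) Uᵀ`, so the quadratic form of `Σ̂⁻¹` is
at most `λ̂_min⁻¹ ‖v‖²`. This bounds the mean term directly, and, evaluated on the unit
eigenvectors of `Σ − Σ̂`, it bounds `tr(Σ̂⁻¹ (Σ − Σ̂)) = tr(Σ̂⁻¹ Σ) − d` by `λ̂_min⁻¹ ‖Σ − Σ̂‖_N`.
What remains is `log det Σ̂ = ∑ log λᵢ ≤ tr Σ̂ − d` and Cauchy–Schwarz on the diagonal of `Σ̂ − Σ`.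
-/

namespace Matrix

variable {n : Type*} [Fintype n]

theorem trace_le_sqrt_card_mul_sqrt_sum_sq (M : Matrix n n ℝ) :
    M.trace ≤ √(Fintype.card n) * √(∑ i, ∑ j, M i j ^ 2) :=
  calc M.trace = ∑ i, 1 * M i i := by simp [trace]
    _ ≤ √(∑ _i : n, (1 : ℝ) ^ 2) * √(∑ i, M i i ^ 2) := Real.sum_mul_le_sqrt_mul_sqrt _ _ _
    _ ≤ √(Fintype.card n) * √(∑ i, ∑ j, M i j ^ 2) := by
        simp only [one_pow, Finset.sum_const, Finset.card_univ, nsmul_eq_mul, mul_one]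
        gcongr with i
        exact Finset.single_le_sum (f := fun j => M i j ^ 2) (fun j _ => sq_nonneg _)
          (Finset.mem_univ i)

variable [DecidableEq n]

theorem dotProduct_conj_diagonal_mulVec (U : Matrix n n ℝ) (f v : n → ℝ) :
    v ⬝ᵥ ((U * diagonal f * Uᵀ) *ᵥ v) = ∑ i, f i * (Uᵀ *ᵥ v) i ^ 2 := by
  rw [← mulVec_mulVec, dotProduct_mulVec, ← vecMul_vecMul, ← mulVec_transpose U v]
  simp only [vecMul_diagonal, dotProduct]
  exact Finset.sum_congr rfl fun i _ => by ring

theorem dotProduct_transpose_mulVec_self {U : Matrix n n ℝ} (hU : U * Uᵀ = 1)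
    (v : n → ℝ) : (Uᵀ *ᵥ v) ⬝ᵥ (Uᵀ *ᵥ v) = v ⬝ᵥ v := by
  rw [dotProduct_mulVec, vecMul_transpose, mulVec_mulVec, hU, one_mulVec]

theorem dotProduct_conj_diagonal_mulVec_le {U : Matrix n n ℝ} (hU : U * Uᵀ = 1)
    {f : n → ℝ} {c : ℝ} (hf : ∀ i, f i ≤ c) (v : n → ℝ) :
    v ⬝ᵥ ((U * diagonal f * Uᵀ) *ᵥ v) ≤ c * (v ⬝ᵥ v) := by
  rw [dotProduct_conj_diagonal_mulVec, ← dotProduct_transpose_mulVec_self hU, dotProduct,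
    Finset.mul_sum]
  exact Finset.sum_le_sum fun i _ => by
    rw [sq]; exact mul_le_mul_of_nonneg_right (hf i) (mul_self_nonneg _)

namespace IsHermitian

variable {A : Matrix n n ℝ} (hA : A.IsHermitian)

local notation "U" => (hA.eigenvectorUnitary : Matrix n n ℝ)

theorem eigenvectorUnitary_mul_transpose : U * Uᵀ = 1 := by
  simpa [star_eq_conjTranspose] using mem_unitaryGroup_iff.mp hA.eigenvectorUnitary.2

theorem transpose_mul_eigenvectorUnitary : Uᵀ * U = 1 := by
  simpa [star_eq_conjTranspose] using mem_unitaryGroup_iff'.mp hA.eigenvectorUnitary.2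

theorem eq_conj_diagonal_eigenvalues : A = U * diagonal hA.eigenvalues * Uᵀ := by
  simpa [Unitary.conjStarAlgAut_apply, star_eq_conjTranspose] using hA.spectral_theorem

end IsHermitian

theorem trace_mul_conj_diagonal (B V : Matrix n n ℝ) (f : n → ℝ) :
    (B * (V * diagonal f * Vᵀ)).trace = ∑ i, f i * (V.col i ⬝ᵥ (B *ᵥ V.col i)) := by
  rw [← mul_assoc, trace_mul_cycle, ← mul_assoc, trace]
  refine Finset.sum_congr rfl fun i _ => ?_
  rw [diag_apply, mul_diagonal, mul_comm]
  simp only [mul_apply, transpose_apply, dotProduct, mulVec, col_apply,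
    Finset.sum_mul, Finset.mul_sum]
  rw [Finset.sum_comm]
  exact Finset.sum_congr rfl fun j _ => Finset.sum_congr rfl fun k _ => by ring

theorem PosSemidef.trace_mul_le_mul_sum_abs_eigenvalues {B D : Matrix n n ℝ}
    (hB : B.PosSemidef) {c : ℝ} (hBc : ∀ v, v ⬝ᵥ (B *ᵥ v) ≤ c * (v ⬝ᵥ v))
    (hD : D.IsHermitian) : (B * D).trace ≤ c * ∑ i, |hD.eigenvalues i| := by
  set V : Matrix n n ℝ := (hD.eigenvectorUnitary : Matrix n n ℝ)
  conv_lhs => rw [hD.eq_conj_diagonal_eigenvalues, trace_mul_conj_diagonal]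
  rw [Finset.mul_sum]
  refine Finset.sum_le_sum fun i _ => ?_
  have hcol : V.col i ⬝ᵥ V.col i = 1 := by
    simpa only [mul_apply, transpose_apply, one_apply_eq, dotProduct, col_apply] using
      congrFun₂ hD.transpose_mul_eigenvectorUnitary i i
  have hq₀ : 0 ≤ V.col i ⬝ᵥ (B *ᵥ V.col i) := by
    simpa using hB.dotProduct_mulVec_nonneg (V.col i)
  have hq₁ : V.col i ⬝ᵥ (B *ᵥ V.col i) ≤ c := by simpa [hcol] using hBc (V.col i)
  calc hD.eigenvalues i * (V.col i ⬝ᵥ (B *ᵥ V.col i))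
      ≤ |hD.eigenvalues i| * c := mul_le_mul (le_abs_self _) hq₁ hq₀ (abs_nonneg _)
    _ = c * |hD.eigenvalues i| := mul_comm _ _

namespace PosDef

variable {A : Matrix n n ℝ}

theorem log_det_le_trace_sub_card_s7 (hA : A.PosDef) :
    Real.log A.det ≤ A.trace - Fintype.card n := by
  have hpos := hA.eigenvalues_pos
  rw [hA.1.det_eq_prod_eigenvalues, hA.1.trace_eq_sum_eigenvalues]
  simp only [RCLike.ofReal_real_eq_id, id]
  rw [Real.log_prod fun i _ => (hpos i).ne']
  calc ∑ i, Real.log (hA.1.eigenvalues i) ≤ ∑ i, (hA.1.eigenvalues i - 1) :=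
        Finset.sum_le_sum fun i _ => Real.log_le_sub_one_of_pos (hpos i)
    _ = _ := by simp [Finset.sum_sub_distrib]

variable (hA : A.PosDef)

theorem inv_eq_conj_diagonal_inv_eigenvalues :
    A⁻¹ = (hA.1.eigenvectorUnitary : Matrix n n ℝ) * diagonal hA.1.eigenvalues⁻¹ *
      (hA.1.eigenvectorUnitary : Matrix n n ℝ)ᵀ := by
  set U : Matrix n n ℝ := (hA.1.eigenvectorUnitary : Matrix n n ℝ)
  refine inv_eq_right_inv ?_
  conv_lhs => arg 1; rw [hA.1.eq_conj_diagonal_eigenvalues]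
  calc U * diagonal hA.1.eigenvalues * Uᵀ * (U * diagonal hA.1.eigenvalues⁻¹ * Uᵀ)
      = U * (diagonal hA.1.eigenvalues * (Uᵀ * U) * diagonal hA.1.eigenvalues⁻¹) * Uᵀ := by
        simp only [mul_assoc]
    _ = 1 := by
        rw [hA.1.transpose_mul_eigenvectorUnitary, mul_one, diagonal_mul_diagonal]
        simp_rw [Pi.inv_apply, mul_inv_cancel₀ (hA.eigenvalues_pos _).ne', diagonal_one, mul_one]
        exact hA.1.eigenvectorUnitary_mul_transpose

theorem dotProduct_inv_mulVec_le (v : n → ℝ) :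
    v ⬝ᵥ (A⁻¹ *ᵥ v) ≤ (⨅ i, hA.1.eigenvalues i)⁻¹ * (v ⬝ᵥ v) := by
  rw [hA.inv_eq_conj_diagonal_inv_eigenvalues]
  refine dotProduct_conj_diagonal_mulVec_le hA.1.eigenvectorUnitary_mul_transpose (fun i => ?_) v
  have : Nonempty n := ⟨i⟩
  obtain ⟨j, hj⟩ := exists_eq_ciInf_of_finite (f := hA.1.eigenvalues)
  rw [← hj]
  exact inv_anti₀ (hA.eigenvalues_pos j) (hj ▸ ciInf_le (Finite.bddBelow_range _) i)

end PosDef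

end Matrix

theorem stmt_7_general (d : ℕ) (mu muHat : Fin d → ℝ)
    (Sig SigHat : Matrix (Fin d) (Fin d) ℝ)
    (hSig : Sig.PosDef) (hSigHat : SigHat.PosDef) :
    Real.log SigHat.det + (SigHat⁻¹ * Sig).trace +
        (mu - muHat) ⬝ᵥ (SigHat⁻¹ *ᵥ (mu - muHat)) ≤
      Sig.trace + Real.sqrt d * Real.sqrt (∑ i, ∑ j, (SigHat i j - Sig i j) ^ 2) +
        (⨅ i, hSigHat.1.eigenvalues i)⁻¹ *
          ((∑ i, |(hSig.1.sub hSigHat.1).eigenvalues i|) +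
            ∑ i, (mu i - muHat i) ^ 2) := by
  have hlog := hSigHat.log_det_le_trace_sub_card_s7
  have hsplit : (SigHat⁻¹ * Sig).trace = d + (SigHat⁻¹ * (Sig - SigHat)).trace := by
    rw [mul_sub, trace_sub, nonsing_inv_mul _ hSigHat.det_pos.ne'.isUnit, trace_one,
      Fintype.card_fin]
    ring
  have hnuclear := hSigHat.inv.posSemidef.trace_mul_le_mul_sum_abs_eigenvalues
    hSigHat.dotProduct_inv_mulVec_le (hSig.1.sub hSigHat.1)
  have hfrobenius := trace_le_sqrt_card_mul_sqrt_sum_sq (SigHat - Sig)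
  have hmean := hSigHat.dotProduct_inv_mulVec_le (mu - muHat)
  simp only [Fintype.card_fin, Matrix.sub_apply] at hlog hfrobenius
  rw [trace_sub] at hfrobenius
  have hnorm : (mu - muHat) ⬝ᵥ (mu - muHat) = ∑ i, (mu i - muHat i) ^ 2 := by
    simp only [dotProduct, Pi.sub_apply, sq]
  rw [hnorm] at hmean
  linarith

/-- deterministic inequality at the heart of Theorem 1's proof:
`log det Σ̂ + tr(Σ̂⁻¹ Σ) + (μ − μ̂)ᵀ Σ̂⁻¹ (μ − μ̂)
  ≤ tr Σ + √d·‖Σ̂ − Σ‖_F + (1/λ̂_min)·(‖Σ − Σ̂‖_N + ‖μ − μ̂‖₂²)`. -/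
theorem stmt_7 (d : ℕ) (hd : 0 < d) (mu muHat : Fin d → ℝ)
    (Sig SigHat : Matrix (Fin d) (Fin d) ℝ)
    (hSig : Sig.PosDef) (hSigHat : SigHat.PosDef) :
    Real.log SigHat.det + (SigHat⁻¹ * Sig).trace +
        (mu - muHat) ⬝ᵥ (SigHat⁻¹ *ᵥ (mu - muHat)) ≤
      Sig.trace + Real.sqrt d * Real.sqrt (∑ i, ∑ j, (SigHat i j - Sig i j) ^ 2) +
        (⨅ i, hSigHat.1.eigenvalues i)⁻¹ *
          ((∑ i, |(hSig.1.sub hSigHat.1).eigenvalues i|) +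
            ∑ i, (mu i - muHat i) ^ 2) :=
  stmt_7_general d mu muHat Sig SigHat hSig hSigHat
end
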